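/- Let d ≥ 1, 0 < α ≤ 2, 0 < β ≤ 1, and assume d > α(2+β)/(1+β) and d > α. Let φ : ℝ^d → ℝ be a nonnegative Schwartz function and define Gψ(x) = ∫_{ℝ^d} ψ(y)|x-y|^{α-d} dy for nonnegative measurable ψ. Then the function G((Gφ)^{1+β}) is bounded on ℝ^d. -/
import Mathlib

set_option maxHeartbeats 1000000

open MeasureTheory Metric Set Real Module

lemma aux_integrable_ball_rpow (d : ℕ) {q : ℝ} (hq : 0 < q) (hqd : q < d) :
    Integrable ((Metric.ball (0 : EuclideanSpace ℝ (Fin d)) 1).indicator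
      (fun z => ‖z‖ ^ (-q))) := by
  have hfr : (finrank ℝ (EuclideanSpace ℝ (Fin d)) : ℝ) = d := by
    rw [finrank_euclideanSpace_fin]
  have hmeas : Measurable fun z : EuclideanSpace ℝ (Fin d) => ‖z‖ ^ (-q) := by fun_prop
  have hmeasI : Measurable ((Metric.ball (0 : EuclideanSpace ℝ (Fin d)) 1).indicator
      (fun z => ‖z‖ ^ (-q))) := hmeas.indicator measurableSet_ball
  have hnn : ∀ z : EuclideanSpace ℝ (Fin d),
      0 ≤ (Metric.ball (0 : EuclideanSpace ℝ (Fin d)) 1).indicator (fun z => ‖z‖ ^ (-q)) z := by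
    intro z
    apply Set.indicator_nonneg
    intro y _
    positivity
  constructor
  · exact hmeasI.aestronglyMeasurable
  · rw [hasFiniteIntegral_iff_ofReal (Filter.Eventually.of_forall hnn)]
    rw [lintegral_eq_lintegral_meas_le volume (Filter.Eventually.of_forall hnn)
      hmeasI.aemeasurable]
    -- bound the measure of superlevel sets
    have hsub : ∀ t : ℝ, 0 < t → {a : EuclideanSpace ℝ (Fin d) |
        t ≤ (Metric.ball (0 : EuclideanSpace ℝ (Fin d)) 1).indicator (fun z => ‖z‖ ^ (-q)) a}
        ⊆ Metric.closedBall (0 : EuclideanSpace ℝ (Fin d)) (t ^ (-q⁻¹)) ∩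
          Metric.ball (0 : EuclideanSpace ℝ (Fin d)) 1 := by
      intro t ht a ha
      simp only [Set.mem_setOf_eq] at ha
      by_cases hmem : a ∈ Metric.ball (0 : EuclideanSpace ℝ (Fin d)) 1
      · rw [Set.indicator_of_mem hmem] at ha
        refine ⟨?_, hmem⟩
        rw [Metric.mem_closedBall, dist_zero_right]
        have ha0 : a ≠ 0 := by
          rintro rfl
          rw [norm_zero, Real.zero_rpow (neg_ne_zero.mpr hq.ne')] at ha
          exact absurd ha (not_le.mpr ht)
        have hna : 0 < ‖a‖ := norm_pos_iff.mpr ha0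
        -- from t ≤ ‖a‖ ^ (-q), deduce ‖a‖ ≤ t ^ (-q⁻¹)
        have h1 : (‖a‖ ^ (-q)) ^ (-q⁻¹) ≤ t ^ (-q⁻¹) :=
          Real.rpow_le_rpow_of_nonpos ht ha (by simp [hq.le, inv_nonneg])
        rwa [← Real.rpow_mul hna.le, neg_mul_neg, mul_inv_cancel₀ hq.ne', Real.rpow_one] at h1
      · rw [Set.indicator_of_notMem hmem] at ha
        exact absurd ha (not_le.mpr ht)
    calc ∫⁻ t in Ioi (0:ℝ), volume {a : EuclideanSpace ℝ (Fin d) |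
            t ≤ (Metric.ball (0 : EuclideanSpace ℝ (Fin d)) 1).indicator (fun z => ‖z‖ ^ (-q)) a}
        ≤ ∫⁻ t in Ioc (0:ℝ) 1 ∪ Ioi 1, volume {a : EuclideanSpace ℝ (Fin d) |
            t ≤ (Metric.ball (0 : EuclideanSpace ℝ (Fin d)) 1).indicator (fun z => ‖z‖ ^ (-q)) a} :=
          lintegral_mono_set Ioi_subset_Ioc_union_Ioi
      _ ≤ (∫⁻ t in Ioc (0:ℝ) 1, volume {a : EuclideanSpace ℝ (Fin d) |
            t ≤ (Metric.ball (0 : EuclideanSpace ℝ (Fin d)) 1).indicator (fun z => ‖z‖ ^ (-q)) a})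
          + ∫⁻ t in Ioi (1:ℝ), volume {a : EuclideanSpace ℝ (Fin d) |
            t ≤ (Metric.ball (0 : EuclideanSpace ℝ (Fin d)) 1).indicator (fun z => ‖z‖ ^ (-q)) a} :=
          lintegral_union_le _ _ _
      _ < ⊤ := by
          refine ENNReal.add_lt_top.2 ⟨?_, ?_⟩
          · calc (∫⁻ t in Ioc (0:ℝ) 1, volume {a : EuclideanSpace ℝ (Fin d) |
                t ≤ (Metric.ball (0 : EuclideanSpace ℝ (Fin d)) 1).indicator (fun z => ‖z‖ ^ (-q)) a})
                ≤ ∫⁻ _ in Ioc (0:ℝ) 1, volume (Metric.ball (0 : EuclideanSpace ℝ (Fin d)) 1) := by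
                  refine setLIntegral_mono' measurableSet_Ioc fun t ht => ?_
                  exact measure_mono ((hsub t ht.1).trans inter_subset_right)
              _ = volume (Metric.ball (0 : EuclideanSpace ℝ (Fin d)) 1) * volume (Ioc (0:ℝ) 1) :=
                  setLIntegral_const _ _
              _ < ⊤ := ENNReal.mul_lt_top measure_ball_lt_top (by simp)
          · have hd1 : (1:ℝ) < (d:ℝ) / q := (one_lt_div hq).2 hqd
            calc (∫⁻ t in Ioi (1:ℝ), volume {a : EuclideanSpace ℝ (Fin d) |
                t ≤ (Metric.ball (0 : EuclideanSpace ℝ (Fin d)) 1).indicator (fun z => ‖z‖ ^ (-q)) a})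
                ≤ ∫⁻ t in Ioi (1:ℝ), ENNReal.ofReal (t ^ (-((d:ℝ)/q))) *
                    volume (Metric.ball (0 : EuclideanSpace ℝ (Fin d)) 1) := by
                  refine setLIntegral_mono' measurableSet_Ioi fun t ht => ?_
                  have ht0 : (0:ℝ) < t := lt_trans one_pos ht
                  calc volume {a : EuclideanSpace ℝ (Fin d) |
                      t ≤ (Metric.ball (0 : EuclideanSpace ℝ (Fin d)) 1).indicator
                        (fun z => ‖z‖ ^ (-q)) a}
                      ≤ volume (Metric.closedBall (0 : EuclideanSpace ℝ (Fin d)) (t ^ (-q⁻¹))) :=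
                        measure_mono ((hsub t ht0).trans inter_subset_left)
                    _ = ENNReal.ofReal ((t ^ (-q⁻¹)) ^ finrank ℝ (EuclideanSpace ℝ (Fin d))) *
                        volume (Metric.ball (0 : EuclideanSpace ℝ (Fin d)) 1) :=
                        Measure.addHaar_closedBall _ _ (Real.rpow_nonneg ht0.le _)
                    _ = ENNReal.ofReal (t ^ (-((d:ℝ)/q))) *
                        volume (Metric.ball (0 : EuclideanSpace ℝ (Fin d)) 1) := by
                        congr 2
                        rw [← Real.rpow_natCast (t ^ (-q⁻¹)), ← Real.rpow_mul ht0.le, hfr]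
                        congr 1
                        field_simp
              _ < ⊤ := by
                  rw [lintegral_mul_const' _ _ measure_ball_lt_top.ne]
                  refine ENNReal.mul_lt_top ?_ measure_ball_lt_top
                  refine IntegrableOn.setLIntegral_lt_top ?_
                  exact integrableOn_Ioi_rpow_of_lt (by linarith) one_pos

lemma aux_dom (d : ℕ) {p q : ℝ} (hp : 0 < p) (hq : 0 < q)
    (x y : EuclideanSpace ℝ (Fin d)) :
    (1 + ‖y‖) ^ (-p) * ‖x - y‖ ^ (-q) ≤
      (Metric.ball x 1).indicator (fun y => ‖x - y‖ ^ (-q)) y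
      + 2 ^ q * (1 + ‖y‖) ^ (-(p + q)) + 2 ^ q * (1 + ‖x - y‖) ^ (-(p + q)) := by
  have hb : (0:ℝ) ≤ ‖y‖ := norm_nonneg _
  have ha : (0:ℝ) ≤ ‖x - y‖ := norm_nonneg _
  have hker : (0:ℝ) ≤ ‖x - y‖ ^ (-q) := Real.rpow_nonneg ha _
  have ht2 : (0:ℝ) ≤ 2 ^ q * (1 + ‖y‖) ^ (-(p + q)) := by positivity
  have ht3 : (0:ℝ) ≤ 2 ^ q * (1 + ‖x - y‖) ^ (-(p + q)) := by positivity
  have hindnn : (0:ℝ) ≤ (Metric.ball x 1).indicator (fun y => ‖x - y‖ ^ (-q)) y :=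
    Set.indicator_nonneg (fun z _ => Real.rpow_nonneg (norm_nonneg _) _) y
  by_cases h1 : ‖x - y‖ < 1
  · have hmem : y ∈ Metric.ball x 1 := by
      rw [Metric.mem_ball, dist_eq_norm, ← norm_neg, neg_sub]
      exact h1
    have h2 : (1 + ‖y‖) ^ (-p) * ‖x - y‖ ^ (-q) ≤ ‖x - y‖ ^ (-q) :=
      mul_le_of_le_one_left hker
        (Real.rpow_le_one_of_one_le_of_nonpos (by linarith) (by linarith))
    rw [Set.indicator_of_mem hmem]
    linarith
  · push_neg at h1
    have hind0 : (1 + ‖y‖) ^ (-p) * ‖x - y‖ ^ (-q) ≤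
        2 ^ q * (1 + ‖y‖) ^ (-(p + q)) + 2 ^ q * (1 + ‖x - y‖) ^ (-(p + q)) := by
      by_cases h2 : ‖y‖ ≤ ‖x - y‖
      · -- term 2 : 1 + ‖y‖ ≤ 2 * ‖x-y‖
        have hle : 1 + ‖y‖ ≤ 2 * ‖x - y‖ := by linarith
        have h3 : (2 * ‖x - y‖) ^ (-q) ≤ (1 + ‖y‖) ^ (-q) :=
          Real.rpow_le_rpow_of_nonpos (by linarith) hle (by linarith)
        have h4 : (2 * ‖x - y‖) ^ (-q) = 2 ^ (-q) * ‖x - y‖ ^ (-q) :=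
          Real.mul_rpow (by norm_num) ha
        have h5 : ‖x - y‖ ^ (-q) ≤ 2 ^ q * (1 + ‖y‖) ^ (-q) := by
          have := h3
          rw [h4] at this
          calc ‖x - y‖ ^ (-q) = 2 ^ q * (2 ^ (-q) * ‖x - y‖ ^ (-q)) := by
                rw [← mul_assoc, ← Real.rpow_add (by norm_num : (0:ℝ) < 2)]
                simp
            _ ≤ 2 ^ q * (1 + ‖y‖) ^ (-q) := by
                have h2q : (0:ℝ) ≤ 2 ^ q := Real.rpow_nonneg (by norm_num) _
                exact mul_le_mul_of_nonneg_left this h2q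
        calc (1 + ‖y‖) ^ (-p) * ‖x - y‖ ^ (-q)
            ≤ (1 + ‖y‖) ^ (-p) * (2 ^ q * (1 + ‖y‖) ^ (-q)) := by
              refine mul_le_mul_of_nonneg_left h5 (Real.rpow_nonneg (by linarith) _)
          _ = 2 ^ q * (1 + ‖y‖) ^ (-(p + q)) := by
              rw [neg_add, Real.rpow_add (by linarith : (0:ℝ) < 1 + ‖y‖)]
              ring
          _ ≤ 2 ^ q * (1 + ‖y‖) ^ (-(p + q)) + 2 ^ q * (1 + ‖x - y‖) ^ (-(p + q)) := by
              linarith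
      · push_neg at h2
        have h3 : (1 + ‖y‖) ^ (-p) ≤ (1 + ‖x - y‖) ^ (-p) :=
          Real.rpow_le_rpow_of_nonpos (by linarith) (by linarith) (by linarith)
        have h5 : ‖x - y‖ ^ (-q) ≤ 2 ^ q * (1 + ‖x - y‖) ^ (-q) := by
          have hle : 1 + ‖x - y‖ ≤ 2 * ‖x - y‖ := by linarith
          have h6 : (2 * ‖x - y‖) ^ (-q) ≤ (1 + ‖x - y‖) ^ (-q) :=
            Real.rpow_le_rpow_of_nonpos (by linarith) hle (by linarith)
          rw [Real.mul_rpow (by norm_num) ha] at h6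
          calc ‖x - y‖ ^ (-q) = 2 ^ q * (2 ^ (-q) * ‖x - y‖ ^ (-q)) := by
                rw [← mul_assoc, ← Real.rpow_add (by norm_num : (0:ℝ) < 2)]
                simp
            _ ≤ 2 ^ q * (1 + ‖x - y‖) ^ (-q) :=
                mul_le_mul_of_nonneg_left h6 (Real.rpow_nonneg (by norm_num) _)
        calc (1 + ‖y‖) ^ (-p) * ‖x - y‖ ^ (-q)
            ≤ (1 + ‖x - y‖) ^ (-p) * (2 ^ q * (1 + ‖x - y‖) ^ (-q)) :=
              mul_le_mul h3 h5 hker (Real.rpow_nonneg (by linarith) _)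
          _ = 2 ^ q * (1 + ‖x - y‖) ^ (-(p + q)) := by
              rw [neg_add, Real.rpow_add (by linarith : (0:ℝ) < 1 + ‖x - y‖)]
              ring
          _ ≤ 2 ^ q * (1 + ‖y‖) ^ (-(p + q)) + 2 ^ q * (1 + ‖x - y‖) ^ (-(p + q)) := by
              linarith
    linarith

lemma aux_G (d : ℕ) {p q : ℝ} (hp : 0 < p) (hq : 0 < q) (hqd : q < (d:ℝ))
    (hpq : (d:ℝ) < p + q) :
    ∃ M : ℝ, ∀ x : EuclideanSpace ℝ (Fin d), ∃ g : EuclideanSpace ℝ (Fin d) → ℝ,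
      Integrable g ∧ (∀ y, (1 + ‖y‖) ^ (-p) * ‖x - y‖ ^ (-q) ≤ g y) ∧
      (∀ y, 0 ≤ g y) ∧ ∫ y, g y = M := by
  have hfr : (finrank ℝ (EuclideanSpace ℝ (Fin d)) : ℝ) = d := by
    rw [finrank_euclideanSpace_fin]
  have hone : Integrable (fun y : EuclideanSpace ℝ (Fin d) => (1 + ‖y‖) ^ (-(p + q))) :=
    integrable_one_add_norm (by rw [hfr]; exact hpq)
  have honeC : Integrable (fun y : EuclideanSpace ℝ (Fin d) =>
      2 ^ q * (1 + ‖y‖) ^ (-(p + q))) := hone.const_mul _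
  set F₁ : EuclideanSpace ℝ (Fin d) → ℝ :=
    (Metric.ball (0 : EuclideanSpace ℝ (Fin d)) 1).indicator (fun z => ‖z‖ ^ (-q)) with hF₁
  have hF₁int : Integrable F₁ := aux_integrable_ball_rpow d hq hqd
  refine ⟨(∫ z, F₁ z) + (∫ y : EuclideanSpace ℝ (Fin d), 2 ^ q * (1 + ‖y‖) ^ (-(p + q)))
      + (∫ y : EuclideanSpace ℝ (Fin d), 2 ^ q * (1 + ‖y‖) ^ (-(p + q))), fun x => ?_⟩
  have hkey : ∀ y : EuclideanSpace ℝ (Fin d),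
      (Metric.ball x 1).indicator (fun y => ‖x - y‖ ^ (-q)) y = F₁ (x - y) := by
    intro y
    by_cases hmem : y ∈ Metric.ball x 1
    · have : x - y ∈ Metric.ball (0 : EuclideanSpace ℝ (Fin d)) 1 := by
        rw [mem_ball_zero_iff]
        rw [Metric.mem_ball, dist_eq_norm, ← norm_neg, neg_sub] at hmem
        exact hmem
      rw [Set.indicator_of_mem hmem, hF₁, Set.indicator_of_mem this]
    · have : x - y ∉ Metric.ball (0 : EuclideanSpace ℝ (Fin d)) 1 := by
        rw [mem_ball_zero_iff]
        rw [Metric.mem_ball, dist_eq_norm, ← norm_neg, neg_sub] at hmem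
        exact hmem
      rw [Set.indicator_of_notMem hmem, hF₁, Set.indicator_of_notMem this]
  have hint1 : Integrable (fun y => F₁ (x - y)) := hF₁int.comp_sub_left x
  have hint3 : Integrable (fun y : EuclideanSpace ℝ (Fin d) =>
      2 ^ q * (1 + ‖x - y‖) ^ (-(p + q))) :=
    honeC.comp_sub_left x
  refine ⟨fun y => F₁ (x - y) + 2 ^ q * (1 + ‖y‖) ^ (-(p + q))
      + 2 ^ q * (1 + ‖x - y‖) ^ (-(p + q)), (hint1.add honeC).add hint3, ?_, ?_, ?_⟩
  · intro y
    have := aux_dom d hp hq x y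
    rwa [hkey y] at this
  · intro y
    have h1 : 0 ≤ F₁ (x - y) :=
      Set.indicator_nonneg (fun z _ => Real.rpow_nonneg (norm_nonneg _) _) _
    have h2 : (0:ℝ) ≤ 2 ^ q * (1 + ‖y‖) ^ (-(p + q)) := by positivity
    have h3 : (0:ℝ) ≤ 2 ^ q * (1 + ‖x - y‖) ^ (-(p + q)) := by positivity
    dsimp only
    linarith
  · have e1 : Integrable (fun y : EuclideanSpace ℝ (Fin d) =>
        F₁ (x - y) + 2 ^ q * (1 + ‖y‖) ^ (-(p + q))) := hint1.add honeC
    rw [integral_add e1 hint3, integral_add hint1 honeC,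
      integral_sub_left_eq_self (fun z => F₁ z) volume x,
      integral_sub_left_eq_self
        (fun y : EuclideanSpace ℝ (Fin d) => 2 ^ q * (1 + ‖y‖) ^ (-(p + q))) volume x]

lemma aux_schwartz (d : ℕ) (φ : SchwartzMap (EuclideanSpace ℝ (Fin d)) ℝ) (k : ℕ) :
    ∃ C : ℝ, 0 ≤ C ∧ ∀ z, |φ z| ≤ C * (1 + ‖z‖) ^ (-(k:ℝ)) := by
  obtain ⟨C0, hC0, h0⟩ := φ.decay 0 0
  obtain ⟨Ck, hCk, hk⟩ := φ.decay k 0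
  refine ⟨2 ^ k * (C0 + Ck), by positivity, fun z => ?_⟩
  have hz : (0:ℝ) ≤ ‖z‖ := norm_nonneg _
  have hφ0 : ‖φ z‖ ≤ C0 := by simpa [norm_iteratedFDeriv_zero] using h0 z
  have hφk : ‖z‖ ^ k * ‖φ z‖ ≤ Ck := by simpa [norm_iteratedFDeriv_zero] using hk z
  have key : (1 + ‖z‖) ^ k * ‖φ z‖ ≤ 2 ^ k * (C0 + Ck) := by
    rcases le_total ‖z‖ 1 with h | h
    · have h1 : (1 + ‖z‖) ^ k ≤ 2 ^ k := by
        apply pow_le_pow_left₀ (by linarith)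
        linarith
      calc (1 + ‖z‖) ^ k * ‖φ z‖ ≤ 2 ^ k * C0 :=
            mul_le_mul h1 hφ0 (norm_nonneg _) (by positivity)
        _ ≤ 2 ^ k * (C0 + Ck) := by nlinarith [hCk.le, pow_pos (show (0:ℝ) < 2 by norm_num) k]
    · have h1 : (1 + ‖z‖) ^ k ≤ 2 ^ k * ‖z‖ ^ k := by
        calc (1 + ‖z‖) ^ k ≤ (2 * ‖z‖) ^ k := by
              apply pow_le_pow_left₀ (by linarith)
              linarith
          _ = 2 ^ k * ‖z‖ ^ k := mul_pow _ _ _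
      calc (1 + ‖z‖) ^ k * ‖φ z‖ ≤ 2 ^ k * ‖z‖ ^ k * ‖φ z‖ :=
            mul_le_mul_of_nonneg_right h1 (norm_nonneg _)
        _ = 2 ^ k * (‖z‖ ^ k * ‖φ z‖) := by ring
        _ ≤ 2 ^ k * Ck := by
            apply mul_le_mul_of_nonneg_left hφk (by positivity)
        _ ≤ 2 ^ k * (C0 + Ck) := by nlinarith [hC0.le, pow_pos (show (0:ℝ) < 2 by norm_num) k]
  have hpow : (0:ℝ) < (1 + ‖z‖) ^ k := by positivity
  rw [Real.rpow_neg (by linarith), Real.rpow_natCast]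
  have key2 : ‖φ z‖ ≤ 2 ^ k * (C0 + Ck) / (1 + ‖z‖) ^ k := by
    rw [le_div_iff₀ hpow]
    linarith [key, mul_comm (‖φ z‖) ((1 + ‖z‖) ^ k)]
  calc |φ z| = ‖φ z‖ := (Real.norm_eq_abs _).symm
    _ ≤ 2 ^ k * (C0 + Ck) / (1 + ‖z‖) ^ k := key2
    _ = 2 ^ k * (C0 + Ck) * ((1 + ‖z‖) ^ k)⁻¹ := by rw [div_eq_mul_inv]

open MeasureTheory

noncomputable def rieszG (d : ℕ) (α : ℝ) (ψ : EuclideanSpace ℝ (Fin d) → ℝ)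
    (x : EuclideanSpace ℝ (Fin d)) : ℝ :=
  ∫ y : EuclideanSpace ℝ (Fin d), ψ y * ‖x - y‖ ^ (α - d)

theorem stmt17 (d : ℕ) (hd : 1 ≤ d) (α β : ℝ) (hα : 0 < α) (hα2 : α ≤ 2)
    (hβ : 0 < β) (hβ1 : β ≤ 1) (hdim : α * (2 + β) / (1 + β) < d) (hdα : α < d)
    (φ : SchwartzMap (EuclideanSpace ℝ (Fin d)) ℝ) (hφ : ∀ x, 0 ≤ φ x) :
    ∃ M : ℝ, ∀ x : EuclideanSpace ℝ (Fin d),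
      |rieszG d α (fun y => (rieszG d α (fun z => φ z) y) ^ (1 + β)) x| ≤ M := by
  set q : ℝ := (d : ℝ) - α with hqdef
  have hq : 0 < q := by simp only [hqdef]; linarith
  have hqd : q < (d : ℝ) := by simp only [hqdef]; linarith
  have hexp : α - (d : ℝ) = -q := by simp only [hqdef]; ring
  -- nonnegativity of the kernel
  have hker : ∀ x y : EuclideanSpace ℝ (Fin d), (0:ℝ) ≤ ‖x - y‖ ^ (-q) :=
    fun x y => Real.rpow_nonneg (norm_nonneg _) _
  -- inner potential
  set Gφ : EuclideanSpace ℝ (Fin d) → ℝ := fun y => rieszG d α (fun z => φ z) y with hGφdef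
  have hGφ_eq : ∀ y, Gφ y = ∫ z, φ z * ‖y - z‖ ^ (-q) := by
    intro y
    simp only [hGφdef, rieszG, hexp]
  have hGφ_nn : ∀ y, 0 ≤ Gφ y := by
    intro y
    rw [hGφ_eq]
    exact integral_nonneg fun z => mul_nonneg (hφ z) (hker y z)
  -- Schwartz decay
  obtain ⟨Cφ, hCφ, hCφ'⟩ := aux_schwartz d φ (2 * d + 2)
  set p₀ : ℝ := ((2 * d + 2 : ℕ) : ℝ) with hp₀def
  have hp₀ : ((d:ℝ)) < p₀ := by simp only [hp₀def]; push_cast; linarith [Nat.cast_nonneg (α := ℝ) d]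
  have hp₀q : 0 < p₀ - q := by linarith
  have hp₀q' : (d:ℝ) < (p₀ - q) + q := by linarith
  have hp₀qd : (d:ℝ) < p₀ - q := by
    simp only [hp₀def] at *
    push_cast at *
    linarith
  -- uniform bound machinery for exponent p₀ - q
  obtain ⟨M₁, hM₁⟩ := aux_G d hp₀q hq hqd hp₀q'
  have hM₁nn : 0 ≤ M₁ := by
    obtain ⟨g, hgint, hgdom, hgnn, hgeq⟩ := hM₁ 0
    rw [← hgeq]
    exact integral_nonneg hgnn
  -- the auxiliary integrable function (1+‖z‖)^(-(p₀-q))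
  have hfr : (finrank ℝ (EuclideanSpace ℝ (Fin d)) : ℝ) = d := by
    rw [finrank_euclideanSpace_fin]
  have hone : Integrable (fun z : EuclideanSpace ℝ (Fin d) => (1 + ‖z‖) ^ (-(p₀ - q))) :=
    integrable_one_add_norm (by rw [hfr]; exact hp₀qd)
  set c₁ : ℝ := ∫ z : EuclideanSpace ℝ (Fin d), (1 + ‖z‖) ^ (-(p₀ - q)) with hc₁def
  have hc₁nn : 0 ≤ c₁ := integral_nonneg fun z => Real.rpow_nonneg (by positivity) _
  set K : ℝ := Cφ * 2 ^ q * (M₁ + c₁) with hKdef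
  have hKnn : 0 ≤ K := by
    have : (0:ℝ) ≤ 2 ^ q := Real.rpow_nonneg (by norm_num) _
    positivity
  -- decay of the inner potential
  have hdecay : ∀ y, Gφ y ≤ K * (1 + ‖y‖) ^ (-q) := by
    intro y
    obtain ⟨g, hgint, hgdom, hgnn, hgeq⟩ := hM₁ y
    have hbase : (0:ℝ) < 1 + ‖y‖ := by positivity
    have hyq : (0:ℝ) ≤ (1 + ‖y‖) ^ q := Real.rpow_nonneg hbase.le _
    -- pointwise bound
    have hpt : ∀ z, (1 + ‖y‖) ^ q * (φ z * ‖y - z‖ ^ (-q)) ≤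
        Cφ * 2 ^ q * (g z + (1 + ‖z‖) ^ (-(p₀ - q))) := by
      intro z
      set a : ℝ := ‖y - z‖ with hadef
      have ha : 0 ≤ a := norm_nonneg _
      have hzb : (0:ℝ) < 1 + ‖z‖ := by positivity
      -- t1 : φ z ≤ Cφ (1+‖z‖)^(-p₀)
      have t1 : φ z ≤ Cφ * (1 + ‖z‖) ^ (-p₀) := by
        have := hCφ' z
        have habs : φ z ≤ |φ z| := le_abs_self _
        simpa only [hp₀def] using habs.trans this
      -- t2 : (1+‖y‖)^q ≤ (1+‖z‖)^q * (1+a)^q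
      have t2 : (1 + ‖y‖) ^ q ≤ (1 + ‖z‖) ^ q * (1 + a) ^ q := by
        have hyz : ‖y‖ ≤ ‖z‖ + a := by
          have h := norm_add_le z (y - z)
          simpa [hadef] using h
        have hprod : 1 + ‖y‖ ≤ (1 + ‖z‖) * (1 + a) := by
          nlinarith [norm_nonneg z, ha]
        calc (1 + ‖y‖) ^ q ≤ ((1 + ‖z‖) * (1 + a)) ^ q :=
              Real.rpow_le_rpow hbase.le hprod hq.le
          _ = (1 + ‖z‖) ^ q * (1 + a) ^ q := Real.mul_rpow hzb.le (by linarith)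
      -- t3 : (1+a)^q * a^(-q) ≤ 2^q * (a^(-q) + 1)
      have t3 : (1 + a) ^ q * a ^ (-q) ≤ 2 ^ q * (a ^ (-q) + 1) := by
        have hanq : (0:ℝ) ≤ a ^ (-q) := Real.rpow_nonneg ha _
        have h2q : (0:ℝ) ≤ (2:ℝ) ^ q := Real.rpow_nonneg (by norm_num) _
        rcases le_total a 1 with h | h
        · have h1 : (1 + a) ^ q ≤ 2 ^ q := Real.rpow_le_rpow (by linarith) (by linarith) hq.le
          have hthis : (1 + a) ^ q * a ^ (-q) ≤ 2 ^ q * a ^ (-q) :=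
            mul_le_mul_of_nonneg_right h1 hanq
          have h4 : 2 ^ q * (a ^ (-q) + 1) = 2 ^ q * a ^ (-q) + 2 ^ q := by ring
          linarith
        · have ha0 : (0:ℝ) < a := by linarith
          have h1 : (1 + a) ^ q ≤ 2 ^ q * a ^ q := by
            calc (1 + a) ^ q ≤ (2 * a) ^ q :=
                  Real.rpow_le_rpow (by linarith) (by linarith) hq.le
              _ = 2 ^ q * a ^ q := Real.mul_rpow (by norm_num) ha
          have h2 : a ^ q * a ^ (-q) = 1 := by
            rw [← Real.rpow_add ha0]
            simp
          have hthis : (1 + a) ^ q * a ^ (-q) ≤ 2 ^ q * a ^ q * a ^ (-q) :=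
            mul_le_mul_of_nonneg_right h1 hanq
          have h3 : 2 ^ q * a ^ q * a ^ (-q) = 2 ^ q := by rw [mul_assoc, h2, mul_one]
          have h4 : 2 ^ q * (a ^ (-q) + 1) = 2 ^ q * a ^ (-q) + 2 ^ q := by ring
          linarith [mul_nonneg h2q hanq]
      -- combine
      have e1 : (1 + ‖z‖) ^ q * (1 + ‖z‖) ^ (-p₀) = (1 + ‖z‖) ^ (-(p₀ - q)) := by
        rw [← Real.rpow_add hzb]
        congr 1
        ring
      have step1 : (1 + ‖y‖) ^ q * (φ z * a ^ (-q)) ≤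
          ((1 + ‖z‖) ^ q * (1 + a) ^ q) * ((Cφ * (1 + ‖z‖) ^ (-p₀)) * a ^ (-q)) := by
        have hanq : (0:ℝ) ≤ a ^ (-q) := Real.rpow_nonneg ha _
        have t1' : φ z * a ^ (-q) ≤ (Cφ * (1 + ‖z‖) ^ (-p₀)) * a ^ (-q) :=
          mul_le_mul_of_nonneg_right t1 hanq
        have hrhsnn : (0:ℝ) ≤ (Cφ * (1 + ‖z‖) ^ (-p₀)) * a ^ (-q) :=
          mul_nonneg (mul_nonneg hCφ (Real.rpow_nonneg hzb.le _)) hanq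
        exact mul_le_mul t2 t1' (mul_nonneg (hφ z) hanq) (by positivity)
      have step2 : ((1 + ‖z‖) ^ q * (1 + a) ^ q) * ((Cφ * (1 + ‖z‖) ^ (-p₀)) * a ^ (-q)) =
          Cφ * ((1 + ‖z‖) ^ (-(p₀ - q)) * ((1 + a) ^ q * a ^ (-q))) := by
        rw [← e1]
        ring
      have step3 : Cφ * ((1 + ‖z‖) ^ (-(p₀ - q)) * ((1 + a) ^ q * a ^ (-q))) ≤
          Cφ * ((1 + ‖z‖) ^ (-(p₀ - q)) * (2 ^ q * (a ^ (-q) + 1))) := by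
        apply mul_le_mul_of_nonneg_left _ hCφ
        exact mul_le_mul_of_nonneg_left t3 (Real.rpow_nonneg hzb.le _)
      have step4 : Cφ * ((1 + ‖z‖) ^ (-(p₀ - q)) * (2 ^ q * (a ^ (-q) + 1))) =
          Cφ * 2 ^ q * ((1 + ‖z‖) ^ (-(p₀ - q)) * a ^ (-q) + (1 + ‖z‖) ^ (-(p₀ - q))) := by
        ring
      have step5 : Cφ * 2 ^ q * ((1 + ‖z‖) ^ (-(p₀ - q)) * a ^ (-q) + (1 + ‖z‖) ^ (-(p₀ - q))) ≤
          Cφ * 2 ^ q * (g z + (1 + ‖z‖) ^ (-(p₀ - q))) := by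
        apply mul_le_mul_of_nonneg_left _ (by positivity)
        have := hgdom z
        have : (1 + ‖z‖) ^ (-(p₀ - q)) * a ^ (-q) ≤ g z := by
          simpa [hadef] using hgdom z
        linarith
      calc (1 + ‖y‖) ^ q * (φ z * a ^ (-q)) ≤ _ := step1
        _ = _ := step2
        _ ≤ _ := step3
        _ = _ := step4
        _ ≤ _ := step5
    -- integrate the pointwise bound
    have hint : Integrable (fun z : EuclideanSpace ℝ (Fin d) =>
        Cφ * 2 ^ q * (g z + (1 + ‖z‖) ^ (-(p₀ - q)))) := (hgint.add hone).const_mul _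
    have hmain : (1 + ‖y‖) ^ q * Gφ y ≤ K := by
      rw [hGφ_eq, ← integral_const_mul _ _]
      calc ∫ z, (1 + ‖y‖) ^ q * (φ z * ‖y - z‖ ^ (-q)) ≤
            ∫ z, Cφ * 2 ^ q * (g z + (1 + ‖z‖) ^ (-(p₀ - q))) := by
            refine integral_mono_of_nonneg ?_ hint ?_
            · exact Filter.Eventually.of_forall fun z =>
                mul_nonneg hyq (mul_nonneg (hφ z) (hker y z))
            · exact Filter.Eventually.of_forall hpt
        _ = Cφ * 2 ^ q * ((∫ z, g z) + c₁) := by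
            rw [integral_const_mul, integral_add hgint hone]
        _ = K := by rw [hgeq, hKdef]
    -- divide by (1+‖y‖)^q
    have hpos : (0:ℝ) < (1 + ‖y‖) ^ q := Real.rpow_pos_of_pos hbase _
    rw [Real.rpow_neg hbase.le]
    calc Gφ y ≤ K / (1 + ‖y‖) ^ q := by
            rw [le_div_iff₀ hpos]
            linarith [hmain, mul_comm (Gφ y) ((1 + ‖y‖) ^ q)]
        _ = K * ((1 + ‖y‖) ^ q)⁻¹ := div_eq_mul_inv _ _
  -- outer exponent
  set p₁ : ℝ := q * (1 + β) with hp₁def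
  have hp₁ : 0 < p₁ := mul_pos hq (by linarith)
  have hpq₁ : (d:ℝ) < p₁ + q := by
    have h1 : α * (2 + β) < (d:ℝ) * (1 + β) := by
      rw [div_lt_iff₀ (by linarith : (0:ℝ) < 1 + β)] at hdim
      linarith [hdim]
    simp only [hp₁def, hqdef]
    nlinarith
  obtain ⟨M₂, hM₂⟩ := aux_G d hp₁ hq hqd hpq₁
  refine ⟨K ^ (1 + β) * M₂, fun x => ?_⟩
  obtain ⟨g, hgint, hgdom, hgnn, hgeq⟩ := hM₂ x
  have hKb : (0:ℝ) ≤ K ^ (1 + β) := Real.rpow_nonneg hKnn _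
  have hpt : ∀ y, (Gφ y) ^ (1 + β) * ‖x - y‖ ^ (-q) ≤ K ^ (1 + β) * g y := by
    intro y
    have hbase : (0:ℝ) < 1 + ‖y‖ := by positivity
    have hGb : (Gφ y) ^ (1 + β) ≤ K ^ (1 + β) * (1 + ‖y‖) ^ (-p₁) := by
      calc (Gφ y) ^ (1 + β) ≤ (K * (1 + ‖y‖) ^ (-q)) ^ (1 + β) :=
            Real.rpow_le_rpow (hGφ_nn y) (hdecay y) (by linarith)
        _ = K ^ (1 + β) * ((1 + ‖y‖) ^ (-q)) ^ (1 + β) :=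
            Real.mul_rpow hKnn (Real.rpow_nonneg hbase.le _)
        _ = K ^ (1 + β) * (1 + ‖y‖) ^ (-p₁) := by
            rw [← Real.rpow_mul hbase.le]
            congr 2
            simp only [hp₁def]
            ring
    calc (Gφ y) ^ (1 + β) * ‖x - y‖ ^ (-q)
        ≤ (K ^ (1 + β) * (1 + ‖y‖) ^ (-p₁)) * ‖x - y‖ ^ (-q) :=
          mul_le_mul_of_nonneg_right hGb (hker x y)
      _ = K ^ (1 + β) * ((1 + ‖y‖) ^ (-p₁) * ‖x - y‖ ^ (-q)) := by ring
      _ ≤ K ^ (1 + β) * g y := mul_le_mul_of_nonneg_left (hgdom y) hKb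
  have hnn2 : ∀ y, (0:ℝ) ≤ (Gφ y) ^ (1 + β) * ‖x - y‖ ^ (-q) :=
    fun y => mul_nonneg (Real.rpow_nonneg (hGφ_nn y) _) (hker x y)
  have hbound : ∫ y, (Gφ y) ^ (1 + β) * ‖x - y‖ ^ (-q) ≤ K ^ (1 + β) * M₂ := by
    calc ∫ y, (Gφ y) ^ (1 + β) * ‖x - y‖ ^ (-q)
        ≤ ∫ y, K ^ (1 + β) * g y :=
          integral_mono_of_nonneg (Filter.Eventually.of_forall hnn2)
            (hgint.const_mul _) (Filter.Eventually.of_forall hpt)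
      _ = K ^ (1 + β) * M₂ := by rw [integral_const_mul, hgeq]
  have houter_eq : rieszG d α (fun y => (Gφ y) ^ (1 + β)) x
      = ∫ y, (Gφ y) ^ (1 + β) * ‖x - y‖ ^ (-q) := by
    simp only [rieszG, hexp]
  have hfin : |rieszG d α (fun y => (Gφ y) ^ (1 + β)) x| ≤ K ^ (1 + β) * M₂ := by
    rw [houter_eq, abs_of_nonneg (integral_nonneg hnn2)]
    exact hbound
  exact hfin
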